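/- arXiv:1905.10825 — 2 statements merged into one kernel-verified Lean document; each statement's English description precedes it below -/
import Mathlib

section
/- Tracking-the-cover-time lemma (unit costs): in the k-armed unit-switching-cost BwSC problem, define stopping times τ_1 ≤ τ_2 ≤ … ≤ τ_{m(S)+1} by: τ_1 is the first time all k actions have been chosen in [1:τ_1], and recursively τ_j is the first time all k actions have been chosen in [τ_{j-1}:τ_j] (each set to ∞ if no such time ≤ T exists), where m(S) = ⌊(S-1)/(k-1)⌋. Then for every environment and every policy π ∈ Π_S, on the event {τ_{m(S)} ≤ t_{m(S)}} (for any fixed t_{m(S)} ≤ T), the number of switches that π makes in the period [τ_{m(S)} : T] is at most k − 1, almost surely. -/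
open MeasureTheory
open scoped Classical ENNReal

namespace BwSC

/-- A (possibly randomized) learning policy for a `k`-armed bandit over horizon `T`
(rounds are 0-indexed internally): at round `t`, given the rewards observed at rounds
`0, …, t-1` and a fresh uniform random seed, it chooses an arm, measurably. -/
structure Policy (k T : ℕ) where
  choose : (t : Fin T) → (Fin t → ℝ) → ℝ → Fin k
  measurable : ∀ t : Fin T, Measurable fun p : (Fin t → ℝ) × ℝ => choose t p.1 p.2

/-- An environment: one reward distribution per arm, each a probability measure on `ℝ`
that is `1`-sub-Gaussian around its mean `μ i`, with means pairwise within distance 1. -/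
structure Env (k : ℕ) where
  D : Fin k → Measure ℝ
  μ : Fin k → ℝ
  prob : ∀ i, IsProbabilityMeasure (D i)
  mean : ∀ i, (∫ x, x ∂(D i)) = μ i
  subgaussian : ∀ i, ∀ l : ℝ, (∫ x, Real.exp (l * (x - μ i)) ∂(D i)) ≤ Real.exp (l ^ 2 / 2)
  bddMeans : ∀ i j, |μ i - μ j| ≤ 1

/-- Sample space: for every round, a fresh reward for every arm together with a
fresh randomization seed. -/
abbrev Sample (k T : ℕ) := Fin T → (Fin k → ℝ) × ℝ

/-- The law of the sample space: independent across rounds; in each round the arms' rewards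
are independent with laws `E.D i`, and the seed is uniform on `[0,1]`. -/
noncomputable def traj (k T : ℕ) (E : Env k) : Measure (Sample k T) :=
  Measure.pi fun _ =>
    (Measure.pi fun i => E.D i).prod (volume.restrict (Set.Icc (0 : ℝ) 1))

/-- The action chosen by policy `π` at (0-indexed) round `t` on sample `ω`. -/
noncomputable def act {k T : ℕ} (π : Policy k T) (ω : Sample k T) : (t : ℕ) → t < T → Fin k :=
  fun t => Nat.strongRecOn (motive := fun t => t < T → Fin k) t fun t ih ht =>
    π.choose ⟨t, ht⟩
      (fun s => (ω ⟨s.1, s.2.trans ht⟩).1 (ih s.1 s.2 (s.2.trans ht)))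
      (ω ⟨t, ht⟩).2

/-- The policy switches between (1-indexed) rounds `r` and `r+1`;
equivalently between 0-indexed rounds `r-1` and `r`. -/
def IsSwitchAt {k T : ℕ} (π : Policy k T) (ω : Sample k T) (r : ℕ) : Prop :=
  ∃ (h1 : r - 1 < T) (h2 : r < T), 1 ≤ r ∧ act π ω (r - 1) h1 ≠ act π ω r h2

/-- Number of switches occurring inside the (1-indexed) period `[a : b]`
(i.e. switch positions `r` with `a ≤ r < b`). -/
noncomputable def switchesIn {k T : ℕ} (π : Policy k T) (ω : Sample k T) (a b : ℕ) : ℕ :=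
  ((Finset.Ico a b).filter fun r => IsSwitchAt π ω r).card

/-- `π` is an `S`-switch (unit-switching-cost `S`-switching-budget) policy: in every
environment, almost surely it makes at most `S` switches over the whole horizon. -/
def UnitBudget {k T : ℕ} (π : Policy k T) (S : ℕ) : Prop :=
  ∀ E : Env k, ∀ᵐ ω ∂(traj k T E), switchesIn π ω 1 T ≤ S

/-- Expected (distribution-dependent) regret of `π` in environment `E`. -/
noncomputable def expRegret {k T : ℕ} (E : Env k) (π : Policy k T) : ℝ :=
  T * (⨆ i, E.μ i) - ∫ ω, (∑ t : Fin T, E.μ (act π ω t.1 t.2)) ∂(traj k T E)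

/-- Worst-case (distribution-free) regret of `π`. -/
noncomputable def regret {k T : ℕ} (π : Policy k T) : ℝ :=
  ⨆ E : Env k, expRegret E π

/-- `m(S) = ⌊(S-1)/(k-1)⌋`. -/
def mIdx (k S : ℕ) : ℕ := (S - 1) / (k - 1)

/-- The exponent `1/(2 - 2^{-m})`. -/
noncomputable def expo (m : ℕ) : ℝ := (2 - (2 : ℝ) ^ (-(m : ℤ)))⁻¹

/-- The exponent `(2 - 2^{-(i-1)})/(2 - 2^{-m})` of the SS-SE interval endpoints. -/
noncomputable def epExp (m i : ℕ) : ℝ :=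
  (2 - (2 : ℝ) ^ (1 - (i : ℤ))) / (2 - (2 : ℝ) ^ (-(m : ℤ)))

/-- The SS-SE interval endpoint `t_i = ⌊k^{1-e_i} T^{e_i}⌋`. -/
noncomputable def ssEnd (k T m i : ℕ) : ℕ :=
  ⌊(k : ℝ) ^ (1 - epExp m i) * (T : ℝ) ^ epExp m i⌋₊

/-- Minimax regret of the `S`-budget `k`-armed unit-switching-cost BwSC problem. -/
noncomputable def minimaxUnit (k S T : ℕ) : ℝ :=
  ⨅ π : {π : Policy k T // UnitBudget π S}, regret π.1


/-! ### General switching costs -/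

/-- A (symmetric, nonnegative, zero-diagonal) switching-cost matrix on `[k]`,
i.e. a complete weighted switching graph `G` on vertex set `Fin k`. -/
structure CostMatrix (k : ℕ) where
  c : Fin k → Fin k → ℝ
  symm : ∀ i j, c i j = c j i
  nonneg : ∀ i j, 0 ≤ c i j
  diag : ∀ i, c i i = 0

/-- The triangle inequality for switching costs. -/
def Triangle {k : ℕ} (G : CostMatrix k) : Prop :=
  ∀ i j l, G.c i j ≤ G.c i l + G.c l j

/-- Total weight of the Hamiltonian path `σ 0 → σ 1 → ⋯ → σ (k-1)`. -/
noncomputable def pathCost {k : ℕ} (c : Fin k → Fin k → ℝ) (σ : Equiv.Perm (Fin k)) : ℝ :=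
  ∑ i : Fin (k - 1),
    c (σ ⟨i.1, by have h := i.2; omega⟩) (σ ⟨i.1 + 1, by have h := i.2; omega⟩)

/-- `H`: the total weight of a shortest Hamiltonian path. -/
noncomputable def hamWeight {k : ℕ} (c : Fin k → Fin k → ℝ) : ℝ :=
  ⨅ σ : Equiv.Perm (Fin k), pathCost c σ

/-- `max_{i,j} c_{i,j}`. -/
noncomputable def maxCost {k : ℕ} (c : Fin k → Fin k → ℝ) : ℝ :=
  ⨆ i, ⨆ j, c i j

/-- `max_i min_{j ≠ i} c_{i,j}`. -/
noncomputable def maxMinCost {k : ℕ} (c : Fin k → Fin k → ℝ) : ℝ :=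
  ⨆ i, ⨅ j : {j : Fin k // j ≠ i}, c i j.1

/-- The switching cost incurred between (1-indexed) rounds `r` and `r+1`. -/
noncomputable def costAt {k T : ℕ} (c : Fin k → Fin k → ℝ) (π : Policy k T)
    (ω : Sample k T) (r : ℕ) : ℝ :=
  if h : 1 ≤ r ∧ r < T then
    c (act π ω (r - 1) ((Nat.sub_le r 1).trans_lt h.2)) (act π ω r h.2)
  else 0

/-- Total switching cost incurred inside the (1-indexed) period `[a : b]`. -/
noncomputable def costIn {k T : ℕ} (c : Fin k → Fin k → ℝ) (π : Policy k T)
    (ω : Sample k T) (a b : ℕ) : ℝ :=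
  ∑ r ∈ Finset.Ico a b, costAt c π ω r

/-- `π` is an `S`-switching-budget policy for the switching graph `G`: in every environment,
almost surely its total switching cost is at most `S`. -/
def CostBudget {k T : ℕ} (G : CostMatrix k) (π : Policy k T) (S : ℝ) : Prop :=
  ∀ E : Env k, ∀ᵐ ω ∂(traj k T E), costIn G.c π ω 1 T ≤ S

/-- `m_G^U(S) = ⌊(S - max_{i,j} c_{i,j})/H⌋` (with `⌊x⌋ = 0` for `x < 0`). -/
noncomputable def mUIdx {k : ℕ} (c : Fin k → Fin k → ℝ) (S : ℝ) : ℕ :=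
  ⌊(S - maxCost c) / hamWeight c⌋₊

/-- `m_G^L(S) = ⌊(S - max_i min_{j ≠ i} c_{i,j})/H⌋` (with `⌊x⌋ = 0` for `x < 0`). -/
noncomputable def mLIdx {k : ℕ} (c : Fin k → Fin k → ℝ) (S : ℝ) : ℕ :=
  ⌊(S - maxMinCost c) / hamWeight c⌋₊

/-- Minimax regret of the `S`-budget BwSC problem with switching graph `G`. -/
noncomputable def minimaxCost {k : ℕ} (G : CostMatrix k) (S : ℝ) (T : ℕ) : ℝ :=
  ⨅ π : {π : Policy k T // CostBudget G π S}, regret π.1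

/-! ### Covers, stopping times, re-switches, batches -/

/-- All `k` actions are chosen during the (1-indexed) period `[a : b]`. -/
def Covers {k T : ℕ} (π : Policy k T) (ω : Sample k T) (a b : ℕ) : Prop :=
  ∀ i : Fin k, ∃ r, a ≤ r ∧ r ≤ b ∧ 1 ≤ r ∧ ∃ h : r - 1 < T, act π ω (r - 1) h = i

/-- The stopping times `τ_j` (1-indexed rounds): `tau π ω 0 = 1` and `tau π ω j` is the first
round `t ≤ T` such that all actions have been chosen in `[tau π ω (j-1) : t]`,
with sentinel value `T + 1` playing the role of `∞`. -/
noncomputable def tau {k T : ℕ} (π : Policy k T) (ω : Sample k T) : ℕ → ℕ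
  | 0 => 1
  | j + 1 =>
      if h : ∃ t, t ≤ T ∧ Covers π ω (tau π ω j) t then Nat.find h else T + 1

/-- The learner re-switches to arm `i` at 0-indexed round `t`: it plays `i` at round `t`
and either `t` is the very first round or a different arm was played at round `t-1`. -/
def IsReswitchAt {k T : ℕ} (π : Policy k T) (ω : Sample k T) (i : Fin k) (t : ℕ) : Prop :=
  ∃ h : t < T, act π ω t h = i ∧ (t = 0 ∨ ∃ h' : t - 1 < T, act π ω (t - 1) h' ≠ i)

/-- The number of re-switches of arm `i` over the whole horizon. -/
noncomputable def reswitches {k T : ℕ} (π : Policy k T) (ω : Sample k T) (i : Fin k) : ℕ :=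
  ((Finset.range T).filter fun t => IsReswitchAt π ω i t).card

/-- `π` is an `M`-batch policy: the horizon splits into `M` batches (with pre-specified
endpoints), and within a batch each decision may depend only on the rewards observed in the
strictly earlier batches (and on the randomization seed). -/
def IsBatch {k T : ℕ} (π : Policy k T) (M : ℕ) : Prop :=
  ∃ b : ℕ → ℕ, b 0 = 0 ∧ Monotone b ∧ b M = T ∧
    ∀ j, j < M → ∀ t : Fin T, b j ≤ t.1 → t.1 < b (j + 1) →
      ∀ (h h' : Fin t → ℝ) (u : ℝ),
        (∀ s : Fin t, s.1 < b j → h s = h' s) → π.choose t h u = π.choose t h' u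

/-- Minimax regret of the `M`-batched `k`-armed stochastic bandit problem. -/
noncomputable def minimaxBatch (k M T : ℕ) : ℝ :=
  ⨅ π : {π : Policy k T // IsBatch π M}, regret π.1

/-- The exponent `1/(2 - 2^{1-M})` appearing in the batched bandit problem. -/
noncomputable def expoB (M : ℕ) : ℝ := (2 - (2 : ℝ) ^ (1 - (M : ℤ)))⁻¹

/-! ### Gaps and shortest-path costs -/

/-- Environment `E` has a (unique) optimal arm whose gap over every other arm is at least `Δ`. -/
def GapGE {k : ℕ} (E : Env k) (Δ : ℝ) : Prop :=
  ∃ i, ∀ j, j ≠ i → E.μ j + Δ ≤ E.μ i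

/-- Environment `E` has a unique optimal arm, and the gap between the optimal and the best
sub-optimal arm is exactly `Δ`. -/
def ExactGap {k : ℕ} (E : Env k) (Δ : ℝ) : Prop :=
  ∃ i, (∀ j, j ≠ i → E.μ j + Δ ≤ E.μ i) ∧ ∃ j, j ≠ i ∧ E.μ j + Δ = E.μ i

/-- The cost of a chain (walk) of vertices. -/
def chainCost {k : ℕ} (c : Fin k → Fin k → ℝ) : List (Fin k) → ℝ
  | [] => 0
  | [_] => 0
  | a :: b :: rest => c a b + chainCost c (b :: rest)

/-- `c'_{i,j}`: the shortest-path distance between `i` and `j` in the weighted graph `c`. -/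
noncomputable def spDist {k : ℕ} (c : Fin k → Fin k → ℝ) (i j : Fin k) : ℝ :=
  sInf {x | ∃ L : List (Fin k), L.head? = some i ∧ L.getLast? = some j ∧ x = chainCost c L}


/-- Auxiliary: the number of distinct values a sequence takes on `[a:b]` is at most
the number of changes plus one. -/
lemma card_image_le_changes {α : Type*} [DecidableEq α] (g : ℕ → α) :
    ∀ b a, a ≤ b → ((Finset.Icc a b).image g).card ≤
      ((Finset.Ico a b).filter fun r => g r ≠ g (r + 1)).card + 1 := by
  intro b
  induction b with
  | zero =>
    intro a ha
    interval_cases a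
    simp
  | succ b ih =>
    intro a ha
    rcases Nat.lt_or_ge a (b + 1) with h | h
    · have hab : a ≤ b := Nat.lt_succ_iff.mp h
      have hIcc : Finset.Icc a (b + 1) = insert (b + 1) (Finset.Icc a b) := by
        ext x; simp; omega
      have hIco : Finset.Ico a (b + 1) = insert b (Finset.Ico a b) := by
        ext x; simp; omega
      have hbmem : b ∉ Finset.Ico a b := by simp
      by_cases hgb : g b = g (b + 1)
      · have h1 : ((Finset.Icc a (b + 1)).image g) = ((Finset.Icc a b).image g) := by
          rw [hIcc, Finset.image_insert, Finset.insert_eq_self.mpr]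
          exact Finset.mem_image.mpr ⟨b, by simp [hab], hgb⟩
        have h2 : ((Finset.Ico a b).filter fun r => g r ≠ g (r + 1)).card ≤
            ((Finset.Ico a (b + 1)).filter fun r => g r ≠ g (r + 1)).card := by
          apply Finset.card_le_card
          apply Finset.filter_subset_filter
          rw [hIco]; exact Finset.subset_insert _ _
        calc ((Finset.Icc a (b + 1)).image g).card = ((Finset.Icc a b).image g).card := by
              rw [h1]
          _ ≤ ((Finset.Ico a b).filter fun r => g r ≠ g (r + 1)).card + 1 := ih a hab
          _ ≤ _ := by omega
      · have h1 : ((Finset.Icc a (b + 1)).image g).card ≤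
            ((Finset.Icc a b).image g).card + 1 := by
          rw [hIcc, Finset.image_insert]
          exact Finset.card_insert_le _ _
        have h2 : ((Finset.Ico a (b + 1)).filter fun r => g r ≠ g (r + 1)).card =
            ((Finset.Ico a b).filter fun r => g r ≠ g (r + 1)).card + 1 := by
          rw [hIco, Finset.filter_insert, if_pos hgb,
            Finset.card_insert_of_notMem (fun hmem => hbmem (Finset.mem_of_mem_filter _ hmem))]
        have := ih a hab
        omega
    · have : a = b + 1 := le_antisymm ha h
      subst this
      simp
    
/-- **Lemma 1.** Tracking-the-cover-time lemma, unit costs. Let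
`m(S) = ⌊(S-1)/(k-1)⌋` and let `τ_1 ≤ τ_2 ≤ …` be the successive cover times of the action
set (`τ_j` is the first round such that all `k` actions are chosen in `[τ_{j-1} : τ_j]`,
with sentinel `T+1` for `∞`). Then for every environment and every `S`-switch policy `π`,
almost surely, on the event `{τ_{m(S)} ≤ t_m}` (for any fixed `t_m ≤ T`), the number of
switches `π` makes in the period `[τ_{m(S)} : T]` is at most `k - 1`. -/
theorem stmt12 (k S T : ℕ) (hk : 1 ≤ k) (hS : 1 ≤ S) (hT : k ≤ T)
    (π : Policy k T) (hπ : UnitBudget π S) (tm : ℕ) (htm : tm ≤ T) :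
    ∀ E : Env k, ∀ᵐ ω ∂(traj k T E),
      tau π ω (mIdx k S) ≤ tm →
        switchesIn π ω (tau π ω (mIdx k S)) T ≤ k - 1 := by
  classical
  intro E
  filter_upwards [hπ E] with ω hbudget htau
  rcases Nat.lt_or_ge k 2 with hk1 | hk2
  · -- k = 1 : there are never any switches
    have hk1' : k = 1 := by omega
    subst hk1'
    have hz : switchesIn π ω (tau π ω (mIdx 1 S)) T = 0 := by
      apply Finset.card_eq_zero.mpr
      apply Finset.filter_false_of_mem
      rintro r _ ⟨h1, h2, _, hne⟩
      exact hne (Subsingleton.elim _ _)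
    omega
  -- main case : k ≥ 2
  set m := mIdx k S with hm
  -- the arm played at 1-indexed round r
  set g : ℕ → Fin k := fun r => if h : r - 1 < T then act π ω (r - 1) h else ⟨0, hk⟩ with hg
  -- characterization of switches via g
  have hswitch : ∀ r, 1 ≤ r → r < T → (IsSwitchAt π ω r ↔ g r ≠ g (r + 1)) := by
    intro r hr1 hrT
    have h1 : r - 1 < T := by omega
    have hgr : g r = act π ω (r - 1) h1 := dif_pos h1
    have hgr1 : g (r + 1) = act π ω r hrT := by
      have : (r + 1) - 1 = r := by omega
      simp only [hg, this, dif_pos hrT]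
    constructor
    · rintro ⟨h1', h2', _, hne⟩
      rw [hgr, hgr1]
      exact hne
    · intro hne
      exact ⟨h1, hrT, hr1, by rw [hgr, hgr1] at hne; exact hne⟩
  have hswitchIn : ∀ a b, 1 ≤ a → b ≤ T →
      switchesIn π ω a b = ((Finset.Ico a b).filter fun r => g r ≠ g (r + 1)).card := by
    intro a b ha hb
    unfold switchesIn
    congr 1
    apply Finset.filter_congr
    intro r hr
    rw [Finset.mem_Ico] at hr
    exact hswitch r (by omega) (by omega)
  -- additivity of switches
  have hsplit : ∀ a b c, 1 ≤ a → a ≤ b → b ≤ c →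
      switchesIn π ω a c = switchesIn π ω a b + switchesIn π ω b c := by
    intro a b c _ hab hbc
    unfold switchesIn
    rw [← Finset.Ico_union_Ico_eq_Ico hab hbc, Finset.filter_union,
      Finset.card_union_of_disjoint]
    exact Finset.disjoint_filter_filter (Finset.Ico_disjoint_Ico_consecutive a b c)
  -- covering a period forces at least k - 1 switches in it
  have hcover_lb : ∀ a b, 1 ≤ a → a ≤ b → b ≤ T → Covers π ω a b →
      k - 1 ≤ switchesIn π ω a b := by
    intro a b ha hab hb hcov
    have himg : (Finset.univ : Finset (Fin k)) ⊆ (Finset.Icc a b).image g := by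
      intro i _
      obtain ⟨r, har, hrb, hr1, h, hact⟩ := hcov i
      exact Finset.mem_image.mpr ⟨r, Finset.mem_Icc.mpr ⟨har, hrb⟩, by
        simp only [hg, dif_pos h]; exact hact⟩
    have hk' : k ≤ ((Finset.Icc a b).image g).card := by
      have := Finset.card_le_card himg
      simpa using this
    have := card_image_le_changes g b a hab
    rw [hswitchIn a b ha hb]
    omega
  -- basic facts about tau
  have htle : ∀ j, tau π ω j ≤ T + 1 := by
    intro j
    induction j with
    | zero => show 1 ≤ T + 1; omega
    | succ j ih =>
      unfold tau
      split
      · next h => exact (Nat.find_spec h).1.trans (by omega)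
      · exact le_refl _
  have hmono1 : ∀ j, tau π ω j ≤ tau π ω (j + 1) := by
    intro j
    conv_rhs => rw [tau]
    split
    · next h =>
      obtain ⟨r, har, hrt, _, _⟩ := (Nat.find_spec h).2 ⟨0, hk⟩
      exact har.trans hrt
    · exact htle j
  have hmono : Monotone (tau π ω) := monotone_nat_of_le_succ hmono1
  have hone : ∀ j, 1 ≤ tau π ω j := by
    intro j
    have := hmono (Nat.zero_le j)
    simpa [tau] using this
  have hcovers : ∀ j, tau π ω (j + 1) ≤ T →
      Covers π ω (tau π ω j) (tau π ω (j + 1)) := by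
    intro j hjT
    by_cases h : ∃ t, t ≤ T ∧ Covers π ω (tau π ω j) t
    · rw [tau, dif_pos h]
      rw [tau, dif_pos h] at hjT
      exact (Nat.find_spec h).2
    · rw [tau, dif_neg h] at hjT
      omega
  have htauT : ∀ j, j ≤ m → tau π ω j ≤ T := fun j hj =>
    (hmono hj).trans (htau.trans htm)
  -- lower bound on switches up to tau j
  have hlow : ∀ j, j ≤ m → j * (k - 1) ≤ switchesIn π ω 1 (tau π ω j) := by
    intro j
    induction j with
    | zero => intro _; simp
    | succ j ih =>
      intro hjm
      have hjm' : j ≤ m := by omega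
      have hT1 : tau π ω (j + 1) ≤ T := htauT _ hjm
      have hcov := hcovers j hT1
      have hlb := hcover_lb (tau π ω j) (tau π ω (j + 1)) (hone j) (hmono1 j)
        hT1 hcov
      have hsp := hsplit 1 (tau π ω j) (tau π ω (j + 1)) (le_refl _) (hone j) (hmono1 j)
      have := ih hjm'
      calc (j + 1) * (k - 1) = j * (k - 1) + (k - 1) := by ring
        _ ≤ switchesIn π ω 1 (tau π ω j) + switchesIn π ω (tau π ω j) (tau π ω (j + 1)) := by
            omega
        _ = switchesIn π ω 1 (tau π ω (j + 1)) := hsp.symm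
  -- put everything together
  have hmT : tau π ω m ≤ T := htau.trans htm
  have hsp := hsplit 1 (tau π ω m) T (le_refl _) (hone m) hmT
  have hlm := hlow m (le_refl m)
  -- arithmetic: S ≤ m * (k-1) + (k-1)
  have hdm : (k - 1) * ((S - 1) / (k - 1)) + (S - 1) % (k - 1) = S - 1 :=
    Nat.div_add_mod (S - 1) (k - 1)
  have hmod : (S - 1) % (k - 1) < k - 1 := Nat.mod_lt _ (by omega)
  have hmm : m * (k - 1) = (k - 1) * ((S - 1) / (k - 1)) := by
    rw [hm, mIdx, Nat.mul_comm]
  rw [hmm] at hlm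
  omega

end BwSC
end

section
/- Tracking-the-cover-time lemma (general costs): in the general-switching-cost BwSC problem with complete weighted switching graph G on [k] (costs satisfying the triangle inequality), shortest-Hamiltonian-path weight H, and m(S) = m_G^L(S) = ⌊(S − max_{i∈[k]} min_{j≠i} c_{i,j})/H⌋, define stopping times τ_1 ≤ … ≤ τ_{m(S)+1} by: τ_1 is the first time all k actions have been chosen in [1:τ_1], and recursively τ_j is the first time all k actions have been chosen in [τ_{j-1}:τ_j] (∞ if no such time ≤ T exists). Then for every environment and every policy π ∈ Π_S, on the event {τ_{m(S)} ≤ t_{m(S)}} (for any fixed t_{m(S)} ≤ T), the total switching cost incurred by π in the period [τ_{m(S)} : T] is strictly less than H + max_{i∈[k]} min_{j≠i} c_{i,j}, almost surely. -/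
open MeasureTheory
open scoped Classical ENNReal

namespace BwSC

/-! ### Auxiliary lemmas for Statement 13 -/

section Aux

variable {k T : ℕ}

lemma chainCost_cons_cons (c : Fin k → Fin k → ℝ) (a b : Fin k) (l : List (Fin k)) :
    chainCost c (a :: b :: l) = c a b + chainCost c (b :: l) := rfl

lemma chainCost_nonneg (c : Fin k → Fin k → ℝ) (hnn : ∀ i j, 0 ≤ c i j) :
    ∀ L : List (Fin k), 0 ≤ chainCost c L
  | [] => le_refl 0
  | [_] => le_refl 0
  | a :: b :: l => add_nonneg (hnn a b) (chainCost_nonneg c hnn (b :: l))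

lemma chainCost_anchor_mono (c : Fin k → Fin k → ℝ)
    (htri : ∀ i j l, c i j ≤ c i l + c l j) (hnn : ∀ i j, 0 ≤ c i j) :
    ∀ {L' L : List (Fin k)}, List.Sublist L' L →
      ∀ x, chainCost c (x :: L') ≤ chainCost c (x :: L) := by
  intro L' L h
  induction h with
  | slnil => intro x; exact le_rfl
  | @cons l₁ l₂ a h ih =>
    intro x
    have h1 : chainCost c (x :: l₁) ≤ c x a + chainCost c (a :: l₁) := by
      cases l₁ with
      | nil => simpa [chainCost] using hnn x a
      | cons b t =>
        rw [chainCost_cons_cons, chainCost_cons_cons]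
        linarith [htri x b a]
    calc chainCost c (x :: l₁) ≤ c x a + chainCost c (a :: l₁) := h1
      _ ≤ c x a + chainCost c (a :: l₂) := by linarith [ih a]
      _ = chainCost c (x :: a :: l₂) := (chainCost_cons_cons c x a l₂).symm
  | @cons_cons l₁ l₂ a h ih =>
    intro x
    rw [chainCost_cons_cons, chainCost_cons_cons]
    linarith [ih a]

lemma chainCost_sublist_mono (c : Fin k → Fin k → ℝ)
    (htri : ∀ i j l, c i j ≤ c i l + c l j) (hnn : ∀ i j, 0 ≤ c i j)
    {L' L : List (Fin k)} (h : List.Sublist L' L) : chainCost c L' ≤ chainCost c L := by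
  induction h with
  | slnil => exact le_rfl
  | @cons l₁ l₂ a h ih =>
    refine ih.trans ?_
    cases l₂ with
    | nil => exact le_rfl
    | cons b t =>
      rw [chainCost_cons_cons]
      linarith [hnn a b]
  | @cons_cons l₁ l₂ a h ih => exact chainCost_anchor_mono c htri hnn h a

lemma chainCost_eq_sum (c : Fin k → Fin k → ℝ) (d : Fin k) :
    ∀ L : List (Fin k),
      chainCost c L
        = ∑ i ∈ Finset.range (L.length - 1), c (L.getD i d) (L.getD (i + 1) d)
  | [] => by simp [chainCost]
  | [a] => by simp [chainCost]
  | a :: b :: l => by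
    rw [chainCost_cons_cons, chainCost_eq_sum c d (b :: l)]
    have hlen : (a :: b :: l).length - 1 = (b :: l).length - 1 + 1 := by simp
    rw [hlen, Finset.sum_range_succ']
    simp [List.getD]
    ring

lemma hamWeight_le_chainCost (c : Fin k → Fin k → ℝ) (hk : 0 < k)
    (htri : ∀ i j l, c i j ≤ c i l + c l j) (hnn : ∀ i j, 0 ≤ c i j)
    (L : List (Fin k)) (hL : ∀ i : Fin k, i ∈ L) :
    hamWeight c ≤ chainCost c L := by
  classical
  set P := L.dedup with hP
  have hsub : List.Sublist P L := L.dedup_sublist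
  have hnd : P.Nodup := L.nodup_dedup
  have hmem : ∀ i : Fin k, i ∈ P := fun i => List.mem_dedup.2 (hL i)
  have hlen : P.length = k := by
    have h1 : P.toFinset = Finset.univ :=
      Finset.eq_univ_iff_forall.2 fun i => List.mem_toFinset.2 (hmem i)
    have h2 := List.toFinset_card_of_nodup hnd
    rw [h1] at h2
    simpa using h2.symm
  set d : Fin k := ⟨0, hk⟩ with hd
  set f : Fin k → Fin k := fun i => P.getD i.1 d with hf
  have hget : ∀ (i : ℕ) (h : i < k), P.getD i d = P.get ⟨i, by rw [hlen]; exact h⟩ := by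
    intro i h
    exact List.getD_eq_get _ _ ⟨i, by rw [hlen]; exact h⟩
  have finj : Function.Injective f := by
    intro i j hij
    rw [hf] at hij
    simp only [hget i.1 i.2, hget j.1 j.2] at hij
    have h4 := (List.nodup_iff_injective_get).1 hnd hij
    rw [Fin.mk.injEq] at h4
    exact Fin.ext h4
  have fbij : Function.Bijective f := Finite.injective_iff_bijective.1 finj
  set σ : Equiv.Perm (Fin k) := Equiv.ofBijective f fbij with hσ
  have hpath : pathCost c σ = chainCost c P := by
    have e1 : pathCost c σ
        = ∑ i : Fin (k - 1), (fun n : ℕ => c (P.getD n d) (P.getD (n + 1) d)) i.1 := by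
      rw [pathCost]
      exact Finset.sum_congr rfl fun i _ => rfl
    rw [e1, chainCost_eq_sum c d P, hlen]
    exact Fin.sum_univ_eq_sum_range (fun n => c (P.getD n d) (P.getD (n + 1) d)) (k - 1)
  have h1 : hamWeight c ≤ pathCost c σ := by
    rw [hamWeight]
    exact ciInf_le (Finite.bddBelow_range _) σ
  calc hamWeight c ≤ pathCost c σ := h1
    _ = chainCost c P := hpath
    _ ≤ chainCost c L := chainCost_sublist_mono c htri hnn hsub

lemma hamWeight_le_costIn (c : Fin k → Fin k → ℝ) (hk : 0 < k)
    (htri : ∀ i j l, c i j ≤ c i l + c l j) (hnn : ∀ i j, 0 ≤ c i j)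
    (π : Policy k T) (ω : Sample k T) (a b : ℕ) (ha : 1 ≤ a) (hb : b ≤ T)
    (hcov : Covers π ω a b) : hamWeight c ≤ costIn c π ω a b := by
  classical
  set A : ℕ → Fin k := fun t => if h : t < T then act π ω t h else ⟨0, hk⟩ with hA
  set W : List (Fin k) := (List.range (b + 1 - a)).map (fun s => A (a - 1 + s)) with hW
  have hab : a ≤ b := by
    obtain ⟨r, h1, h2, h3, _⟩ := hcov ⟨0, hk⟩
    omega
  have hgd : ∀ j : ℕ, j < b + 1 - a → W.getD j ⟨0, hk⟩ = A (a - 1 + j) := by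
    intro j hj
    simp [hW, List.getD_eq_getElem?_getD, hj]
  have hmem : ∀ i : Fin k, i ∈ W := by
    intro i
    obtain ⟨r, h1, h2, h3, hr, hact⟩ := hcov i
    refine List.mem_map.2 ⟨r - a, List.mem_range.2 (by omega), ?_⟩
    have he : a - 1 + (r - a) = r - 1 := by omega
    rw [he, hA]
    simp only [dif_pos hr]
    exact hact
  have hcost : chainCost c W = costIn c π ω a b := by
    rw [chainCost_eq_sum c ⟨0, hk⟩ W]
    have hlen : W.length = b + 1 - a := by simp [hW]
    rw [costIn, Finset.sum_Ico_eq_sum_range, hlen]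
    have hl1 : b + 1 - a - 1 = b - a := by omega
    rw [hl1]
    refine Finset.sum_congr rfl fun i hi => ?_
    rw [Finset.mem_range] at hi
    have hiT : a + i < T := by omega
    have h1r : 1 ≤ a + i := by omega
    rw [hgd i (by omega), hgd (i + 1) (by omega), costAt, dif_pos ⟨h1r, hiT⟩, hA]
    have e1 : a - 1 + i = a + i - 1 := by omega
    have e2 : a - 1 + (i + 1) = a + i := by omega
    rw [e1, e2]
    have hT1 : a + i - 1 < T := by omega
    simp only [dif_pos hT1, dif_pos hiT]
  rw [← hcost]
  exact hamWeight_le_chainCost c hk htri hnn W hmem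

lemma tau_le_succT (π : Policy k T) (ω : Sample k T) :
    ∀ j, tau π ω j ≤ T + 1 := by
  intro j
  cases j with
  | zero => show 1 ≤ T + 1; omega
  | succ j =>
    rw [tau]
    split
    · next h => exact (Nat.find_spec h).1.trans (by omega)
    · exact le_rfl

lemma tau_mono_succ (π : Policy k T) (ω : Sample k T) (hk : 0 < k) (j : ℕ) :
    tau π ω j ≤ tau π ω (j + 1) := by
  conv_rhs => rw [tau]
  split
  · next h =>
    obtain ⟨r, hr1, hr2, _⟩ := (Nat.find_spec h).2 ⟨0, hk⟩
    omega
  · exact tau_le_succT π ω j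

lemma one_le_tau (π : Policy k T) (ω : Sample k T) (hk : 0 < k) :
    ∀ j, 1 ≤ tau π ω j := by
  intro j
  induction j with
  | zero => exact le_rfl
  | succ j ih => exact ih.trans (tau_mono_succ π ω hk j)

lemma covers_tau (π : Policy k T) (ω : Sample k T) (j : ℕ)
    (h : tau π ω (j + 1) ≤ T) :
    Covers π ω (tau π ω j) (tau π ω (j + 1)) := by
  by_cases hex : ∃ t, t ≤ T ∧ Covers π ω (tau π ω j) t
  · rw [tau, dif_pos hex]
    exact (Nat.find_spec hex).2
  · rw [tau, dif_neg hex] at h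
    omega

end Aux

/-- **Lemma 2.** Tracking-the-cover-time lemma, general costs. Let `G` be a
complete weighted switching graph on `[k]` (`k ≥ 2`) whose costs satisfy the triangle
inequality, `H > 0` the weight of a shortest Hamiltonian path, and
`m = m_G^L(S) = ⌊(S - max_i min_{j≠i} c_{i,j})/H⌋`. With `τ_1 ≤ τ_2 ≤ …` the successive
cover times of the action set (sentinel `T+1` for `∞`), for every environment and every
`S`-switching-budget policy `π`, almost surely, on the event `{τ_m ≤ t_m}` (for any fixed
`t_m ≤ T`), the total switching cost incurred in the period `[τ_m : T]` is strictly less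
than `H + max_i min_{j≠i} c_{i,j}`. -/
theorem stmt13 (k : ℕ) (G : CostMatrix k) (S : ℝ) (T : ℕ)
    (hk : 2 ≤ k) (htri : Triangle G) (hS : 0 ≤ S) (hT : k ≤ T) (hH : 0 < hamWeight G.c)
    (π : Policy k T) (hπ : CostBudget G π S) (tm : ℕ) (htm : tm ≤ T) :
    ∀ E : Env k, ∀ᵐ ω ∂(traj k T E),
      tau π ω (mLIdx G.c S) ≤ tm →
        costIn G.c π ω (tau π ω (mLIdx G.c S)) T < hamWeight G.c + maxMinCost G.c := by
  intro E
  filter_upwards [hπ E] with ω hbudget hτ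
  set M := mLIdx G.c S with hM
  have hk0 : 0 < k := by omega
  have hnn : ∀ i j, 0 ≤ G.c i j := G.nonneg
  have htri' : ∀ i j l, G.c i j ≤ G.c i l + G.c l j := htri
  have h1 : ∀ j, 1 ≤ tau π ω j := one_le_tau π ω hk0
  have hmono : Monotone (tau π ω) :=
    monotone_nat_of_le_succ (tau_mono_succ π ω hk0)
  have hTle : ∀ j, j ≤ M → tau π ω j ≤ T :=
    fun j hj => (hmono hj).trans (hτ.trans htm)
  have key : ∀ j, j ≤ M → (j : ℝ) * hamWeight G.c ≤ costIn G.c π ω 1 (tau π ω j) := by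
    intro j
    induction j with
    | zero =>
      intro _
      have h0 : tau π ω 0 = 1 := rfl
      rw [h0]
      simp [costIn]
    | succ j ih =>
      intro hj
      have hj' : j ≤ M := by omega
      have hsplit :
          costIn G.c π ω 1 (tau π ω j) + costIn G.c π ω (tau π ω j) (tau π ω (j + 1))
            = costIn G.c π ω 1 (tau π ω (j + 1)) :=
        Finset.sum_Ico_consecutive _ (h1 j) (tau_mono_succ π ω hk0 j)
      have hcover : Covers π ω (tau π ω j) (tau π ω (j + 1)) :=
        covers_tau π ω j (hTle (j + 1) hj)
      have hH' :=
        hamWeight_le_costIn G.c hk0 htri' hnn π ω _ _ (h1 j) (hTle (j + 1) hj) hcover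
      have hih := ih hj'
      push_cast
      linarith
  have hfin :
      costIn G.c π ω 1 (tau π ω M) + costIn G.c π ω (tau π ω M) T = costIn G.c π ω 1 T :=
    Finset.sum_Ico_consecutive _ (h1 M) (hτ.trans htm)
  have hfloor : S - maxMinCost G.c < ((M : ℝ) + 1) * hamWeight G.c := by
    have h2 : (S - maxMinCost G.c) / hamWeight G.c < (M : ℝ) + 1 := by
      have h3 := Nat.lt_floor_add_one ((S - maxMinCost G.c) / hamWeight G.c)
      rw [hM, mLIdx]
      exact_mod_cast h3
    exact (div_lt_iff₀ hH).1 h2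
  have hkey := key M le_rfl
  linarith

end BwSC
end
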